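/- Every Bernstein subset of ℝ is nonmeager (of second Baire category) in ℝ with its Euclidean topology. -/

import Mathlib

open Set Topology

/-!
A meagre set `B` misses a dense `Gδ` set `t`. Such a set is uncountable, since countable sets
are meagre in `ℝ`, and, being Borel, it contains a Cantor set. That Cantor set is an uncountable
closed set disjoint from `B`, so `B` is not a Bernstein set.
-/

/-- A Bernstein set: both `B` and its complement meet every uncountable closed
(in the Euclidean topology) subset of `ℝ`. -/
def IsBernstein (B : Set ℝ) : Prop :=
  ∀ C : Set ℝ, IsClosed C → ¬C.Countable → (B ∩ C).Nonempty ∧ (Bᶜ ∩ C).Nonempty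

lemma not_countable_nat_bool : ¬Countable (ℕ → Bool) := by
  rw [← Cardinal.mk_le_aleph0_iff, Cardinal.mk_arrow]
  simpa using Cardinal.aleph0_lt_continuum

section Meagre

variable {X : Type*} [TopologicalSpace X] [T1Space X] [∀ x : X, (𝓝[≠] x).NeBot]

lemma Set.Countable.isMeagre {s : Set X} (hs : s.Countable) : IsMeagre s := by
  rw [← biUnion_of_singleton s]
  exact isMeagre_biUnion hs fun x _ =>
    ((isClosed_singleton.isNowhereDense_iff).2 (interior_singleton x)).isMeagre

lemma not_countable_of_mem_residual [BaireSpace X] [Nonempty X] {s : Set X}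
    (hs : s ∈ residual X) : ¬s.Countable :=
  fun hc => not_isMeagre_of_mem_residual hs hc.isMeagre

end Meagre

section Polish

variable {α : Type*} [TopologicalSpace α] [PolishSpace α] [MeasurableSpace α] [BorelSpace α]
  {s : Set α}

lemma MeasurableSet.exists_nat_bool_injection_of_not_countable (hs : MeasurableSet s)
    (hunc : ¬s.Countable) :
    ∃ f : (ℕ → Bool) → α, range f ⊆ s ∧ Continuous f ∧ Function.Injective f := by
  -- `s` is closed for a finer Polish topology, and continuity survives coarsening the target.
  obtain ⟨t', ht'_le, ht'_polish, hs_closed, -⟩ := hs.isClopenable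
  obtain ⟨f, hfs, hf_cont, hf_inj⟩ :=
    @IsClosed.exists_nat_bool_injection_of_not_countable α t' ht'_polish s hs_closed hunc
  exact ⟨f, hfs, continuous_le_rng ht'_le hf_cont, hf_inj⟩

lemma MeasurableSet.exists_isCompact_subset_not_countable (hs : MeasurableSet s)
    (hunc : ¬s.Countable) : ∃ K ⊆ s, IsCompact K ∧ ¬K.Countable := by
  obtain ⟨f, hfs, hf_cont, hf_inj⟩ := hs.exists_nat_bool_injection_of_not_countable hunc
  refine ⟨range f, hfs, isCompact_range hf_cont, fun hc => ?_⟩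
  have := hc.to_subtype
  exact not_countable_nat_bool (Countable.of_equiv _ (Equiv.ofInjective f hf_inj).symm)

end Polish

/-- Every Bernstein subset of `ℝ` is nonmeager in `ℝ` with its Euclidean topology. -/
theorem bernstein_not_meagre (B : Set ℝ) (hB : IsBernstein B) : ¬IsMeagre B := by
  intro hB_meagre
  obtain ⟨t, htB, ht_Gδ, ht_dense⟩ := mem_residual.1 hB_meagre
  have ht_unc : ¬t.Countable := not_countable_of_mem_residual (residual_of_dense_Gδ ht_Gδ ht_dense)
  obtain ⟨K, hKt, hK, hK_unc⟩ := ht_Gδ.measurableSet.exists_isCompact_subset_not_countable ht_unc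
  obtain ⟨x, hxB, hxK⟩ := (hB K hK.isClosed hK_unc).1
  exact htB (hKt hxK) hxB
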